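/- arXiv:2503.02630 — 3 statements merged into one kernel-verified Lean document; each statement's English description precedes it below -/
import Mathlib

section
/- For a Gaussian process posterior, the pointwise absolute prediction error of the posterior mean interpolant μ_n for a function f in the RKHS H of the kernel is bounded by the posterior standard deviation times the RKHS norm: |f(z) − μ_n(z)| ≤ s_n(z) · ‖f‖_H for all z. -/
open Matrix BigOperators

theorem stmt_13 {Z : Type*} {H : Type*} [NormedAddCommGroup H] [InnerProductSpace ℝ H]
    {m : ℕ} (φ : Z → H) (zs : Fin m → Z) (f : H)
    (k : Z → Z → ℝ) (hk : ∀ a b, k a b = inner ℝ (φ a) (φ b))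
    (Kn : Matrix (Fin m) (Fin m) ℝ) (hKn : Kn = Matrix.of fun i j => k (zs i) (zs j))
    (hKnPD : Kn.PosDef)
    (μ : Z → ℝ)
    (hμ : ∀ z, μ z = ∑ i, ∑ j, k z (zs i) * Kn⁻¹ i j * inner ℝ f (φ (zs j)))
    (s : Z → ℝ)
    (hs : ∀ z, s z = Real.sqrt (k z z - ∑ i, ∑ j, k z (zs i) * Kn⁻¹ i j * k (zs j) z)) :
    ∀ z, |inner ℝ f (φ z) - μ z| ≤ s z * ‖f‖ := by
  intro z
  classical
  have hksymm : ∀ a b, k a b = k b a := fun a b => by rw [hk, hk, real_inner_comm]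
  set v : Fin m → ℝ := fun i => k z (zs i) with hv
  set c : Fin m → ℝ := fun j => ∑ i, v i * Kn⁻¹ i j with hc
  set u : H := ∑ j, c j • φ (zs j) with hu
  -- symmetry of Kn and Kn⁻¹
  have hKsym : Knᵀ = Kn := by
    ext i j
    simp [hKn, Matrix.transpose_apply, hksymm (zs j) (zs i)]
  have hKinvsym : ∀ i j, Kn⁻¹ i j = Kn⁻¹ j i := by
    intro i j
    have : (Kn⁻¹)ᵀ = Kn⁻¹ := by rw [Matrix.transpose_nonsing_inv, hKsym]
    calc Kn⁻¹ i j = (Kn⁻¹)ᵀ j i := rfl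
      _ = Kn⁻¹ j i := by rw [this]
  have hdet : IsUnit Kn.det := isUnit_iff_ne_zero.mpr (ne_of_gt hKnPD.det_pos)
  have hunit : Kn * Kn⁻¹ = 1 := Matrix.mul_nonsing_inv _ hdet
  have hKc : ∀ j, ∑ j', Kn j j' * c j' = v j := by
    intro j
    calc ∑ j', Kn j j' * c j'
        = ∑ j', ∑ i, v i * (Kn j j' * Kn⁻¹ j' i) := by
          apply Finset.sum_congr rfl
          intro j' _
          rw [hc, Finset.mul_sum]
          apply Finset.sum_congr rfl
          intro i _
          rw [hKinvsym i j']; ring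
      _ = ∑ i, v i * ∑ j', Kn j j' * Kn⁻¹ j' i := by
          rw [Finset.sum_comm]
          exact Finset.sum_congr rfl fun i _ => by rw [Finset.mul_sum]
      _ = ∑ i, v i * (1 : Matrix (Fin m) (Fin m) ℝ) j i := by
          apply Finset.sum_congr rfl
          intro i _
          rw [← hunit]; rfl
      _ = v j := by
          simp [Matrix.one_apply, Finset.sum_ite_eq, eq_comm]
  -- μ z = ⟪f, u⟫
  have hμu : μ z = inner ℝ f u := by
    rw [hμ, hu, inner_sum, Finset.sum_comm]
    apply Finset.sum_congr rfl
    intro j _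
    rw [inner_smul_right, hc, Finset.sum_mul]
  -- inner ℝ (φ z) u
  have hφu : (inner ℝ (φ z) u : ℝ) = ∑ j, c j * v j := by
    rw [hu, inner_sum]
    apply Finset.sum_congr rfl
    intro j _
    rw [inner_smul_right, ← hk]
  -- inner ℝ u u
  have huu : (inner ℝ u u : ℝ) = ∑ j, c j * v j := by
    rw [hu, inner_sum]
    apply Finset.sum_congr rfl
    intro j _
    rw [inner_smul_right, sum_inner]
    rw [show (∑ j', inner ℝ (c j' • φ (zs j')) (φ (zs j)) : ℝ) = ∑ j', Kn j j' * c j' by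
      apply Finset.sum_congr rfl
      intro j' _
      have hKnapp : Kn j j' = k (zs j) (zs j') := by rw [hKn]; rfl
      rw [real_inner_smul_left, ← hk, hKnapp, hksymm (zs j') (zs j)]
      ring]
    rw [hKc j]
  -- the sum S in s equals ∑ j, c j * v j
  have hS : (∑ i, ∑ j, k z (zs i) * Kn⁻¹ i j * k (zs j) z) = ∑ j, c j * v j := by
    rw [Finset.sum_comm]
    apply Finset.sum_congr rfl
    intro j _
    rw [hc, Finset.sum_mul]
    apply Finset.sum_congr rfl
    intro i _
    rw [hksymm (zs j) z]
  -- norm of φ z - u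
  have hnorm : ‖φ z - u‖ ^ 2 = k z z - ∑ j, c j * v j := by
    rw [@norm_sub_sq_real]
    have h1 : ‖φ z‖ ^ 2 = k z z := by
      rw [hk, real_inner_self_eq_norm_sq]
    have h2 : ‖u‖ ^ 2 = ∑ j, c j * v j := by
      rw [← huu, real_inner_self_eq_norm_sq]
    rw [h1, h2, hφu]; ring
  have hsz : s z = ‖φ z - u‖ := by
    rw [hs, hS, ← hnorm, Real.sqrt_sq (norm_nonneg _)]
  calc |inner ℝ f (φ z) - μ z| = |(inner ℝ f (φ z - u) : ℝ)| := by rw [inner_sub_right, hμu]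
    _ ≤ ‖f‖ * ‖φ z - u‖ := abs_real_inner_le_norm f (φ z - u)
    _ = s z * ‖f‖ := by rw [hsz]; ring
end

section
/- For a translation-invariant kernel K with K(z,z) = 1, the GP posterior variance at any point z satisfies s_n(z)² ≤ 2(1 − K(z, z_i)) for every design point z_i. -/
open Matrix BigOperators

theorem stmt_14 {Z : Type*} {H : Type*} [NormedAddCommGroup H] [InnerProductSpace ℝ H]
    {m : ℕ} (φ : Z → H) (zs : Fin m → Z)
    (k : Z → Z → ℝ) (hk : ∀ a b, k a b = inner ℝ (φ a) (φ b))
    (hone : ∀ z, k z z = 1)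
    (Kn : Matrix (Fin m) (Fin m) ℝ) (hKn : Kn = Matrix.of fun i j => k (zs i) (zs j))
    (hKnPD : Kn.PosDef) :
    ∀ (z : Z) (i : Fin m),
      k z z - ∑ p, ∑ q, k z (zs p) * Kn⁻¹ p q * k (zs q) z ≤ 2 * (1 - k z (zs i)) := by
  intro z i
  have hsym : ∀ a b, k a b = k b a := by
    intro a b; rw [hk, hk, real_inner_comm]
  have hKnsym : Knᵀ = Kn := by
    have := hKnPD.isHermitian.eq
    simpa using this
  set kv : Fin m → ℝ := fun p => k z (zs p) with hkv
  set w : Fin m → ℝ := Kn⁻¹ *ᵥ kv with hw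
  have hKninv : Kn * Kn⁻¹ = 1 := Matrix.mul_nonsing_inv _ (isUnit_iff_ne_zero.mpr hKnPD.det_pos.ne')
  have hKw : Kn *ᵥ w = kv := by
    rw [hw, Matrix.mulVec_mulVec, hKninv, Matrix.one_mulVec]
  set e : Fin m → ℝ := Pi.single i 1 with he
  have hpos : 0 ≤ (e - w) ⬝ᵥ (Kn *ᵥ (e - w)) := hKnPD.posSemidef.dotProduct_mulVec_nonneg (e - w)
  have h1 : e ⬝ᵥ (Kn *ᵥ e) = 1 := by
    simp [he, Matrix.mulVec_single, single_dotProduct, hKn, hone]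
  have h2 : e ⬝ᵥ (Kn *ᵥ w) = kv i := by
    rw [hKw]; simp [he, single_dotProduct]
  have h3 : w ⬝ᵥ (Kn *ᵥ e) = kv i := by
    rw [Matrix.dotProduct_mulVec, ← Matrix.mulVec_transpose, hKnsym, hKw]
    simp [he, dotProduct_single]
  have h4 : w ⬝ᵥ (Kn *ᵥ w) = kv ⬝ᵥ w := by
    rw [Matrix.dotProduct_mulVec, ← Matrix.mulVec_transpose, hKnsym, hKw]
  have hexp : (e - w) ⬝ᵥ (Kn *ᵥ (e - w)) = 1 - 2 * kv i + kv ⬝ᵥ w := by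
    simp only [Matrix.mulVec_sub, sub_dotProduct, dotProduct_sub, h1, h2, h3, h4]
    ring
  have hsum : ∑ p, ∑ q, k z (zs p) * Kn⁻¹ p q * k (zs q) z = kv ⬝ᵥ w := by
    simp only [hw, dotProduct, Matrix.mulVec, Finset.mul_sum]
    refine Finset.sum_congr rfl fun p _ => Finset.sum_congr rfl fun q _ => ?_
    rw [hsym (zs q) z]
    ring
  rw [hone, hsum]
  rw [hexp] at hpos
  linarith
end

section
/- Any n×n Euclidean distance matrix can be written as a nonnegative linear combination of at most n(n−1)/2 linearly independent extreme-direction matrices Γ_z = (z∘z)1ᵀ + 1(z∘z)ᵀ − 2zzᵀ with 1ᵀz = 0. -/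
open Matrix BigOperators

/-- `D` is a Euclidean distance matrix: there are points in some Euclidean space
whose pairwise squared distances are the entries of `D`. -/
def IsEDM {n : ℕ} (D : Matrix (Fin n) (Fin n) ℝ) : Prop :=
  ∃ (k : ℕ) (x : Fin n → EuclideanSpace ℝ (Fin k)), ∀ i j, D i j = ‖x i - x j‖ ^ 2

/-- Carathéodory for cones: a nonnegative combination can be rewritten as a
nonnegative combination of a linearly independent subfamily. -/
lemma cone_carath {ι : Type*} [Fintype ι] [DecidableEq ι] {M : Type*} [AddCommGroup M]
    [Module ℝ M] (v : ι → M) (s : Finset ι) (w : ι → ℝ) (hw : ∀ i ∈ s, 0 ≤ w i) :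
    ∃ (t : Finset ι) (w' : ι → ℝ), t ⊆ s ∧ (∀ i ∈ t, 0 ≤ w' i) ∧
      LinearIndependent ℝ (fun i : t => v i) ∧
      ∑ i ∈ s, w i • v i = ∑ i ∈ t, w' i • v i := by
  induction s using Finset.strongInduction generalizing w with
  | _ s ih =>
    by_cases hLI : LinearIndependent ℝ (fun i : s => v i)
    · exact ⟨s, w, subset_rfl, hw, hLI, rfl⟩
    · obtain ⟨g, hg, igex⟩ := Fintype.not_linearIndependent_iff.mp hLI
      have key : ∀ g : s → ℝ, (∑ i, g i • v (i : ι) = 0) → (∃ i, 0 < g i) →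
          ∃ (t : Finset ι) (w' : ι → ℝ), t ⊆ s ∧ (∀ i ∈ t, 0 ≤ w' i) ∧
            LinearIndependent ℝ (fun i : t => v i) ∧
            ∑ i ∈ s, w i • v i = ∑ i ∈ t, w' i • v i := by
        intro g hg ⟨ip, hip⟩
        classical
        set G : ι → ℝ := fun i => if h : i ∈ s then g ⟨i, h⟩ else 0 with hG
        have hGmem : ∀ i : s, G (i : ι) = g i := by
          intro i; simp [hG, i.2]
        have hGsum : ∑ i ∈ s, G i • v i = 0 := by
          rw [← Finset.sum_attach s (fun i => G i • v i)]
          simpa only [hGmem, Finset.univ_eq_attach] using hg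
        have hTne : ((ip : ι)) ∈ s.filter (fun i => 0 < G i) := by
          refine Finset.mem_filter.mpr ⟨ip.2, ?_⟩
          rw [hGmem]; exact hip
        obtain ⟨i₀, hi₀T, hmin⟩ := Finset.exists_min_image (s.filter (fun i => 0 < G i))
          (fun i => w i / G i) ⟨ip, hTne⟩
        have hi₀s : i₀ ∈ s := (Finset.mem_filter.mp hi₀T).1
        have hGi₀ : 0 < G i₀ := (Finset.mem_filter.mp hi₀T).2
        set r : ℝ := w i₀ / G i₀ with hr
        have hr0 : 0 ≤ r := div_nonneg (hw i₀ hi₀s) hGi₀.le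
        set W : ι → ℝ := fun i => w i - r * G i with hW
        have hWnn : ∀ i ∈ s, 0 ≤ W i := by
          intro i hi
          rcases le_or_gt (G i) 0 with h | h
          · have : r * G i ≤ 0 := mul_nonpos_of_nonneg_of_nonpos hr0 h
            have := hw i hi
            simp only [hW]; linarith
          · have hiT : i ∈ s.filter (fun i => 0 < G i) := Finset.mem_filter.mpr ⟨hi, h⟩
            have := hmin i hiT
            have : r * G i ≤ w i := by
              rw [← le_div_iff₀ h]; exact this
            simp only [hW]; linarith
        have hWi₀ : W i₀ = 0 := by
          simp only [hW, hr]
          field_simp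
          ring
        have hWsum : ∑ i ∈ s, W i • v i = ∑ i ∈ s, w i • v i := by
          have hstep : ∀ i, W i • v i = w i • v i - r • (G i • v i) := by
            intro i; simp only [hW, sub_smul, smul_smul]
          rw [Finset.sum_congr rfl (fun i _ => hstep i), Finset.sum_sub_distrib,
            ← Finset.smul_sum, hGsum, smul_zero, sub_zero]
        have herase : ∑ i ∈ s.erase i₀, W i • v i = ∑ i ∈ s, W i • v i :=
          Finset.sum_erase _ (by rw [hWi₀, zero_smul])
        obtain ⟨t, w', hts, hw', hli, hsum⟩ :=
          ih (s.erase i₀) (Finset.erase_ssubset hi₀s) W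
            (fun i hi => hWnn i (Finset.mem_of_mem_erase hi))
        exact ⟨t, w', hts.trans (Finset.erase_subset _ _), hw', hli, by
          rw [← hWsum, ← herase, hsum]⟩
      obtain ⟨i, hi⟩ := igex
      rcases hi.lt_or_gt with h | h
      · refine key (fun i => -g i) ?_ ⟨i, show 0 < -g i from neg_pos.mpr h⟩
        simp only [neg_smul, Finset.sum_neg_distrib, hg, neg_zero]
      · exact key g hg ⟨i, h⟩

/-- The map sending a matrix to the function `{off-diagonal unordered pairs} → ℝ`,
`s(a,b) ↦ A a b + A b a`. -/
noncomputable def offDiagMap (n : ℕ) :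
    Matrix (Fin n) (Fin n) ℝ →ₗ[ℝ] ({e : Sym2 (Fin n) // ¬ e.IsDiag} → ℝ) where
  toFun A := fun e => Sym2.lift ⟨fun i j => A i j + A j i, fun i j => by ring⟩ e.1
  map_add' A B := by
    funext e
    obtain ⟨e, he⟩ := e
    induction e using Sym2.ind with
    | _ a b => simp [Sym2.lift_mk]; ring
  map_smul' c A := by
    funext e
    obtain ⟨e, he⟩ := e
    induction e using Sym2.ind with
    | _ a b => simp [Sym2.lift_mk]; ring

lemma card_le_of_li {n : ℕ} {ι : Type*} [Fintype ι] (z : ι → Fin n → ℝ)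
    (h : LinearIndependent ℝ (fun i => Matrix.of fun a b => (z i a - z i b) ^ 2)) :
    Fintype.card ι ≤ n * (n - 1) / 2 := by
  classical
  set F : ι → Matrix (Fin n) (Fin n) ℝ := fun i => Matrix.of fun a b => (z i a - z i b) ^ 2
  have hφli : LinearIndependent ℝ (fun i => offDiagMap n (F i)) := by
    rw [Fintype.linearIndependent_iff]
    intro g hg
    apply Fintype.linearIndependent_iff.mp h g
    have hzero : ∀ a b : Fin n, ∑ i, g i * F i a b = 0 := by
      intro a b
      rcases eq_or_ne a b with rfl | hab
      · simp [F]
      · have := congrFun hg ⟨s(a, b), by simp [hab]⟩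
        simp only [Finset.sum_apply, Pi.smul_apply, Pi.zero_apply, smul_eq_mul] at this
        have h2 : ∀ i, g i * (offDiagMap n (F i)) ⟨s(a, b), by simp [hab]⟩
            = 2 * (g i * F i a b) := by
          intro i
          have hsymm : F i b a = F i a b := by simp [F]; ring
          simp only [offDiagMap, LinearMap.coe_mk, AddHom.coe_mk, Sym2.lift_mk, hsymm]
          ring
        rw [Finset.sum_congr rfl (fun i _ => h2 i), ← Finset.mul_sum] at this
        linarith
    ext a b
    simp only [Matrix.sum_apply, Matrix.smul_apply, smul_eq_mul, Matrix.zero_apply]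
    exact hzero a b
  have hcard := hφli.fintype_card_le_finrank
  rwa [Module.finrank_fintype_fun_eq_card, Sym2.card_subtype_not_diag, Fintype.card_fin,
    Nat.choose_two_right] at hcard

theorem stmt_19 {n : ℕ} (D : Matrix (Fin n) (Fin n) ℝ) (hD : IsEDM D) :
    ∃ (m : ℕ) (z : Fin m → (Fin n → ℝ)) (w : Fin m → ℝ),
      m ≤ n * (n - 1) / 2 ∧
      (∀ i, ∑ a, z i a = 0) ∧
      (∀ i, 0 ≤ w i) ∧
      LinearIndependent ℝ (fun i => Matrix.of fun a b => (z i a - z i b) ^ 2) ∧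
      D = ∑ i, w i • Matrix.of fun a b => (z i a - z i b) ^ 2 := by
  classical
  obtain ⟨k, x, hx⟩ := hD
  -- centered coordinate vectors
  set z0 : Fin k → Fin n → ℝ := fun j a => x a j - (∑ b, x b j) / n with hz0
  have hz0sum : ∀ j, ∑ a, z0 j a = 0 := by
    intro j
    rcases Nat.eq_zero_or_pos n with hn | hn
    · subst hn; simp
    · have hn' : (n : ℝ) ≠ 0 := Nat.cast_ne_zero.mpr hn.ne'
      simp only [hz0, Finset.sum_sub_distrib, Finset.sum_const, Finset.card_univ,
        Fintype.card_fin, nsmul_eq_mul]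
      field_simp
      ring
  have hdiff : ∀ j a b, z0 j a - z0 j b = x a j - x b j := by
    intro j a b; simp [hz0]
  have hDsum : D = ∑ j : Fin k, (1 : ℝ) • Matrix.of fun a b => (z0 j a - z0 j b) ^ 2 := by
    ext a b
    rw [hx a b]
    have hnorm : ‖x a - x b‖ ^ 2 = ∑ j, (x a j - x b j) ^ 2 := by
      rw [EuclideanSpace.norm_eq, Real.sq_sqrt (by positivity)]
      congr 1
      funext j
      simp [Real.norm_eq_abs, sq_abs]
    rw [hnorm]
    simp only [Matrix.sum_apply, Matrix.smul_apply, Matrix.of_apply, one_smul]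
    exact Finset.sum_congr rfl fun j _ => by rw [hdiff]
  -- apply cone Carathéodory
  set F : Fin k → Matrix (Fin n) (Fin n) ℝ :=
    fun j => Matrix.of fun a b => (z0 j a - z0 j b) ^ 2 with hF
  obtain ⟨t, w', hts, hw', hli, hsum⟩ :=
    cone_carath F Finset.univ (fun _ => (1 : ℝ)) (fun _ _ => zero_le_one)
  -- reindex by Fin t.card
  set e := t.equivFin with he
  refine ⟨t.card, fun i => z0 (e.symm i : Fin k), fun i => w' (e.symm i : Fin k), ?_, ?_, ?_, ?_, ?_⟩
  · have := card_le_of_li (fun i : t => z0 (i : Fin k)) hli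
    simpa [Fintype.card_coe] using this
  · intro i; exact hz0sum _
  · intro i; exact hw' _ (e.symm i).2
  · have : LinearIndependent ℝ (fun i : Fin t.card => F ((e.symm i : t) : Fin k)) :=
      hli.comp e.symm e.symm.injective
    exact this
  · rw [hDsum, hsum]
    rw [← Finset.sum_attach t (fun j => w' j • F j)]
    exact (Equiv.sum_comp e.symm (fun i : t => w' (i : Fin k) • F (i : Fin k))).symm
end
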